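/- arXiv:1012.1222 — 3 statements merged into one kernel-verified Lean document; each statement's English description precedes it below -/
import Mathlib

section
/- Suppose a tileset defined by a finite set F of forbidden patterns admits only quasi-periodic tilings. Then for every pattern P with domain [-n,n]^2 that appears in some valid tiling, there exists an integer m such that every locally valid pattern R with domain [-n-m,n+m]^2 (containing no forbidden pattern of F) whose central [-n,n]^2 restriction equals P contains another occurrence of P in each of the four corner subpatterns R|[-n-m,-n]^2, R|[-n-m,-n]×[n,n+m], R|[n,n+m]×[-n-m,-n], and R|[n,n+m]^2. -/
/-- A configuration of the discrete plane. -/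
def Config (Q : Type*) := ℤ × ℤ → Q

/-- A pattern: a finite domain together with colors (only values on `dom` matter). -/
structure Pattern (Q : Type*) where
  dom : Finset (ℤ × ℤ)
  val : ℤ × ℤ → Q

/-- The square domain `[-n,n]^2`. -/
noncomputable def square (n : ℕ) : Finset (ℤ × ℤ) := Finset.Icc (-(n:ℤ), -(n:ℤ)) ((n:ℤ), (n:ℤ))

/-- The rectangle `[a,b] × [c,d]`. -/
noncomputable def rect (a b c d : ℤ) : Finset (ℤ × ℤ) := Finset.Icc (a, c) (b, d)

/-- The pattern of `c` with domain `D`, shifted by `v`. -/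
def subPattern {Q : Type*} (c : Config Q) (v : ℤ × ℤ) (D : Finset (ℤ × ℤ)) : Pattern Q :=
  ⟨D, fun x => c (v + x)⟩

/-- `P` appears in the configuration `c`. -/
def Pattern.appearsIn {Q : Type*} (P : Pattern Q) (c : Config Q) : Prop :=
  ∃ v : ℤ × ℤ, ∀ x ∈ P.dom, c (v + x) = P.val x

/-- `P` appears in the pattern `M`. -/
def Pattern.appearsInPat {Q : Type*} (P M : Pattern Q) : Prop :=
  ∃ v : ℤ × ℤ, ∀ x ∈ P.dom, v + x ∈ M.dom ∧ M.val (v + x) = P.val x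

/-- `c` is a valid tiling for the set of forbidden patterns `F`. -/
def ValidFor {Q : Type*} (F : Set (Pattern Q)) (c : Config Q) : Prop :=
  ∀ P ∈ F, ¬ P.appearsIn c

/-- `c` is quasi-periodic: every pattern appearing in `c` appears in every
sufficiently large square pattern of `c`. -/
def QuasiPeriodic {Q : Type*} (c : Config Q) : Prop :=
  ∀ P : Pattern Q, P.appearsIn c →
    ∃ n : ℕ, ∀ v : ℤ × ℤ, P.appearsInPat (subPattern c v (square n))

/-- A pattern is locally valid for `F` if no forbidden pattern of `F` appears inside it. -/
def LocallyValid {Q : Type*} (F : Set (Pattern Q)) (R : Pattern Q) : Prop :=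
  ∀ Pf ∈ F, ¬ Pf.appearsInPat R

/-- The four-corners property: every locally valid pattern `R` on `[-n-m,n+m]^2` whose
central `[-n,n]^2` restriction is `P` contains `P` in each of the four corner subpatterns. -/
def FourCorners {Q : Type*} (F : Set (Pattern Q)) (P : Pattern Q) (n m : ℕ) : Prop :=
  ∀ R : Pattern Q, R.dom = square (n + m) → LocallyValid F R →
    (∀ x ∈ square n, R.val x = P.val x) →
      (P.appearsInPat ⟨rect (-((n:ℤ)+(m:ℤ))) (-(n:ℤ)) (-((n:ℤ)+(m:ℤ))) (-(n:ℤ)), R.val⟩ ∧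
       P.appearsInPat ⟨rect (-((n:ℤ)+(m:ℤ))) (-(n:ℤ)) (n:ℤ) ((n:ℤ)+(m:ℤ)), R.val⟩ ∧
       P.appearsInPat ⟨rect (n:ℤ) ((n:ℤ)+(m:ℤ)) (-((n:ℤ)+(m:ℤ))) (-(n:ℤ)), R.val⟩ ∧
       P.appearsInPat ⟨rect (n:ℤ) ((n:ℤ)+(m:ℤ)) (n:ℤ) ((n:ℤ)+(m:ℤ)), R.val⟩)

/-!
Argue by contradiction, one corner at a time. If for every `m` some locally valid extension
`R m` of `P` to `[-n-m,n+m]^2` misses `P` in the corner, a cluster point `d` of the `R m` in the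
compact space `Q^(ℤ²)` is a valid tiling (each forbidden pattern is finite, so it would already
occur in some `R m`) and contains `P` at the origin. By quasi-periodicity `P` occurs in every
`N`-square of `d`, in particular in one lying inside the corner for all `m ≥ 2N`; since `d` agrees
with infinitely many `R m` on that occurrence, this contradicts the choice of the `R m`.
-/

open Filter

theorem exists_frequently_agree {α ι Q : Type*} [Finite Q] {l : Filter α} [l.NeBot]
    (c : α → ι → Q) : ∃ d : ι → Q, ∀ S : Finset ι, ∃ᶠ a in l, ∀ x ∈ S, c a x = d x := by
  -- `ι → Q` is compact for the discrete topology on `Q`, so `c` has a cluster point along `l`.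
  let _ : TopologicalSpace Q := ⊥
  have _ : DiscreteTopology Q := ⟨rfl⟩
  obtain ⟨d, -, hd⟩ := isCompact_univ.exists_clusterPt (f := map c l) (by simp)
  refine ⟨d, fun S => MapClusterPt.frequently (p := fun f => ∀ x ∈ S, f x = d x) hd ?_⟩
  rw [eventually_all_finset]
  exact fun x _ => (continuous_apply x).continuousAt (isOpen_discrete {d x} |>.mem_nhds rfl)

lemma mem_square {x : ℤ × ℤ} {n : ℕ} :
    x ∈ square n ↔ -(n : ℤ) ≤ x.1 ∧ x.1 ≤ n ∧ -(n : ℤ) ≤ x.2 ∧ x.2 ≤ n := by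
  simp only [square, Finset.mem_Icc, Prod.le_def]
  omega

lemma square_mono {m m' : ℕ} (h : m ≤ m') : square m ⊆ square m' := fun x hx => by
  rw [mem_square] at hx ⊢
  omega

lemma exists_subset_square (S : Finset (ℤ × ℤ)) : ∃ B : ℕ, S ⊆ square B := by
  refine ⟨S.sup fun p => p.1.natAbs ⊔ p.2.natAbs, fun y hy => ?_⟩
  have hy := Finset.le_sup (f := fun p => p.1.natAbs ⊔ p.2.natAbs) hy
  simp only [sup_le_iff] at hy
  rw [mem_square]
  omega

lemma Pattern.appearsInPat_of_subset {Q : Type*} {P : Pattern Q} {D D' : Finset (ℤ × ℤ)}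
    {f : ℤ × ℤ → Q} (hD : D ⊆ D') (h : P.appearsInPat ⟨D, f⟩) : P.appearsInPat ⟨D', f⟩ := by
  obtain ⟨v, hv⟩ := h
  exact ⟨v, fun x hx => ⟨hD (hv x hx).1, (hv x hx).2⟩⟩

lemma LocallyValid.restrict {Q : Type*} {F : Set (Pattern Q)} {R : Pattern Q}
    (hR : LocallyValid F R) {D : Finset (ℤ × ℤ)} (hD : D ⊆ R.dom) :
    LocallyValid F ⟨D, R.val⟩ :=
  fun Pf hPf h => hR Pf hPf (Pattern.appearsInPat_of_subset hD h)

lemma validFor_of_frequently_agree {Q : Type*} {F : Set (Pattern Q)} {R : ℕ → Pattern Q}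
    (hR : ∀ m, LocallyValid F (R m)) (hdom : ∀ m, square m ⊆ (R m).dom) {d : Config Q}
    (hd : ∀ S : Finset (ℤ × ℤ), ∃ᶠ m in atTop, ∀ x ∈ S, (R m).val x = d x) :
    ValidFor F d := by
  rintro Pf hPf ⟨v, hv⟩
  obtain ⟨B, hB⟩ := exists_subset_square (Pf.dom.image (v + ·))
  obtain ⟨m, hmB, hm⟩ := ((eventually_ge_atTop B).and_frequently (hd _)).exists
  have hvx : ∀ x ∈ Pf.dom, v + x ∈ Pf.dom.image (v + ·) := fun x => Finset.mem_image_of_mem _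
  exact hR m Pf hPf
    ⟨v, fun x hx => ⟨hdom m (square_mono hmB (hB (hvx x hx))), (hm _ (hvx x hx)).trans (hv x hx)⟩⟩

def ExtensionsContain {Q : Type*} (F : Set (Pattern Q)) (P : Pattern Q) (n m : ℕ)
    (D : Finset (ℤ × ℤ)) : Prop :=
  ∀ R : Pattern Q, R.dom = square (n + m) → LocallyValid F R →
    (∀ x ∈ square n, R.val x = P.val x) → P.appearsInPat ⟨D, R.val⟩

lemma ExtensionsContain.mono {Q : Type*} {F : Set (Pattern Q)} {P : Pattern Q} {n m m' : ℕ}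
    {D D' : Finset (ℤ × ℤ)} (h : ExtensionsContain F P n m D) (hm : m ≤ m') (hD : D ⊆ D') :
    ExtensionsContain F P n m' D' := fun R hRdom hR hcen =>
  Pattern.appearsInPat_of_subset hD <|
    h ⟨square (n + m), R.val⟩ rfl (hR.restrict (hRdom ▸ square_mono (by omega))) hcen

theorem exists_extensionsContain_of_quasiPeriodic {Q : Type*} [Finite Q] {F : Set (Pattern Q)}
    (hqp : ∀ c : Config Q, ValidFor F c → QuasiPeriodic c) {n : ℕ} {P : Pattern Q}
    (hdom : P.dom = square n) {D : ℕ → Finset (ℤ × ℤ)}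
    (hD : ∀ N : ℕ, ∃ v : ℤ × ℤ, ∀ᶠ m in atTop, ∀ x ∈ square N, v + x ∈ D m) :
    ∃ m, ExtensionsContain F P n m (D m) := by
  by_contra! hcon
  simp only [ExtensionsContain, not_forall] at hcon
  choose R hRdom hR hcen hRnot using hcon
  obtain ⟨d, hd⟩ := exists_frequently_agree (l := atTop) fun m => (R m).val
  have hvalid : ValidFor F d :=
    validFor_of_frequently_agree hR (fun m => hRdom m ▸ square_mono (by omega)) hd
  have hPd : P.appearsIn d := by
    obtain ⟨m, hm⟩ := (hd P.dom).exists
    exact ⟨0, fun x hx => by rw [zero_add, ← hm x hx, hcen m x (hdom ▸ hx)]⟩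
  obtain ⟨N, hN⟩ := hqp d hvalid P hPd
  obtain ⟨v, hv⟩ := hD N
  obtain ⟨w, hw⟩ := hN v
  obtain ⟨m, hmD, hm⟩ := (hv.and_frequently (hd (P.dom.image (v + w + ·)))).exists
  refine hRnot m ⟨v + w, fun x hx => ?_⟩
  rw [add_assoc]
  have hagree := add_assoc v w x ▸ hm _ (Finset.mem_image_of_mem _ hx)
  exact ⟨hmD _ (hw x hx).1, hagree.trans (hw x hx).2⟩

def cornerLo (n m : ℕ) : Bool → ℤ
  | true => n
  | false => -((n : ℤ) + m)

def cornerHi (n m : ℕ) : Bool → ℤ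
  | true => (n : ℤ) + m
  | false => -(n : ℤ)

/-- In each coordinate `true` selects `[n, n+m]` and `false` selects `[-n-m, -n]`. -/
noncomputable def corner (n m : ℕ) (ex ey : Bool) : Finset (ℤ × ℤ) :=
  rect (cornerLo n m ex) (cornerHi n m ex) (cornerLo n m ey) (cornerHi n m ey)

lemma corner_mono {n m m' : ℕ} (h : m ≤ m') (ex ey : Bool) :
    corner n m ex ey ⊆ corner n m' ex ey := by
  apply Finset.Icc_subset_Icc <;> cases ex <;> cases ey <;>
    simp only [Prod.mk_le_mk, cornerLo, cornerHi] <;> omega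

lemma exists_translate_square_subset_corner (n N : ℕ) (ex ey : Bool) :
    ∃ v : ℤ × ℤ, ∀ᶠ m in atTop, ∀ x ∈ square N, v + x ∈ corner n m ex ey := by
  refine ⟨(cornerLo n (2 * N) ex + N, cornerLo n (2 * N) ey + N),
    eventually_atTop.2 ⟨2 * N, fun m hm x hx => ?_⟩⟩
  rw [mem_square] at hx
  simp only [corner, rect, Finset.mem_Icc, Prod.le_def, Prod.fst_add, Prod.snd_add]
  cases ex <;> cases ey <;> simp only [cornerLo, cornerHi] <;> omega

lemma eventually_extensionsContain_corner {Q : Type*} [Finite Q] {F : Set (Pattern Q)}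
    (hqp : ∀ c : Config Q, ValidFor F c → QuasiPeriodic c) {n : ℕ} {P : Pattern Q}
    (hdom : P.dom = square n) (ex ey : Bool) :
    ∀ᶠ m in atTop, ExtensionsContain F P n m (corner n m ex ey) := by
  obtain ⟨m₀, h⟩ := exists_extensionsContain_of_quasiPeriodic hqp hdom
    (exists_translate_square_subset_corner n · ex ey)
  exact eventually_atTop.2 ⟨m₀, fun m hm => h.mono hm (corner_mono hm ex ey)⟩

theorem stmt2_general {Q : Type} [Fintype Q] (F : Set (Pattern Q))
    (hqp : ∀ c : Config Q, ValidFor F c → QuasiPeriodic c)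
    (n : ℕ) (P : Pattern Q) (hdom : P.dom = square n) :
    ∃ m : ℕ, FourCorners F P n m := by
  have h := eventually_extensionsContain_corner hqp hdom
  obtain ⟨m, hff, hft, htf, htt⟩ :=
    ((h false false).and ((h false true).and ((h true false).and (h true true)))).exists
  exact ⟨m, fun R hRdom hR hcen =>
    ⟨hff R hRdom hR hcen, hft R hRdom hR hcen, htf R hRdom hR hcen, htt R hRdom hR hcen⟩⟩

/-- If a tileset admits only quasi-periodic tilings, then every pattern on `[-n,n]^2`
appearing in some valid tiling satisfies the four-corners property for some `m`. -/
theorem stmt2 {Q : Type} [Fintype Q] (F : Set (Pattern Q)) (hF : F.Finite)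
    (hqp : ∀ c : Config Q, ValidFor F c → QuasiPeriodic c)
    (n : ℕ) (P : Pattern Q) (hdom : P.dom = square n)
    (hP : ∃ c : Config Q, ValidFor F c ∧ P.appearsIn c) :
    ∃ m : ℕ, FourCorners F P n m :=
  stmt2_general F hqp n P hdom
end

section
/- Let w_p be the Toeplitz-type word with w_p(n) = first nonzero base-p digit of n+1, and let X_p ⊆ ({1,...,p-1})^Z be the subshift of all bi-infinite configurations all of whose finite factors are factors of w_p. Then X_p is a minimal subshift. -/
/-- The word `w` occurs in the bi-infinite configuration `c` at position `i`. -/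
def OccursAt {α : Type*} (w : List α) (c : ℤ → α) (i : ℤ) : Prop :=
  ∀ j : Fin w.length, c (i + (j : ℕ)) = w.get j

/-- The word `w` appears (somewhere) in `c`. -/
def AppearsIn {α : Type*} (w : List α) (c : ℤ → α) : Prop :=
  ∃ i : ℤ, OccursAt w c i

/-- `w` is in the language of the set of configurations `X`. -/
def InLang {α : Type*} (X : Set (ℤ → α)) (w : List α) : Prop :=
  ∃ c ∈ X, AppearsIn w c

/-- `X` is minimal: every word of its language appears in every configuration of `X`. -/
def MinimalLang {α : Type*} (X : Set (ℤ → α)) : Prop :=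
  ∀ w : List α, InLang X w → ∀ c ∈ X, AppearsIn w c

/-- The set of configurations avoiding every word of `Fw`. -/
def Avoiders {α : Type*} (Fw : Set (List α)) : Set (ℤ → α) :=
  {c | ∀ w ∈ Fw, ¬ AppearsIn w c}

/-- `c` is periodic (its shift orbit is finite). -/
def PeriodicConf {α : Type*} (c : ℤ → α) : Prop :=
  ∃ p : ℤ, p ≠ 0 ∧ ∀ i : ℤ, c (i + p) = c i

/-- `X` is shift-invariant. -/
def ShiftInv {α : Type*} (X : Set (ℤ → α)) : Prop :=
  ∀ c ∈ X, (fun i => c (i + 1)) ∈ X ∧ (fun i => c (i - 1)) ∈ X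

/-- `X` is a subshift: closed (for the product of discrete topologies) and
shift-invariant. -/
def IsSubshift {α : Type*} (X : Set (ℤ → α)) : Prop :=
  @IsClosed _ (@Pi.topologicalSpace ℤ (fun _ => α) (fun _ => ⊥)) X ∧ ShiftInv X

/-- The first nonzero digit in the base-`p` expansion of `n` (reading from the least
significant digit): `(n / p^k) % p` where `p^k` is the largest power of `p` dividing `n`. -/
def firstDigit (p n : ℕ) : ℕ := (n / p ^ padicValNat p n) % p

/-- The Toeplitz-type word `w_p`: its `i`-th letter is the first nonzero base-`p` digit
of `i + 1`. -/
def wp (p : ℕ) (i : ℕ) : ℕ := firstDigit p (i + 1)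

/-- The finite word `w` occurs in `w_p` at position `i`. -/
def OccursAtW (p : ℕ) (w : List ℕ) (i : ℕ) : Prop :=
  ∀ j : Fin w.length, wp p (i + (j : ℕ)) = w.get j

/-- The subshift `X_p`: all bi-infinite configurations all of whose finite factors are
factors of `w_p`. -/
def Xp (p : ℕ) : Set (ℤ → ℕ) :=
  {c | ∀ (i : ℤ) (n : ℕ), ∃ m : ℕ, ∀ j : ℕ, j < n → c (i + (j : ℕ)) = wp p (m + j)}

/-!
Every factor `w_p[m, m + n)` recurs with period `p^L` once `m + n < p^L`: adding a multiple of
`p^L` to a number `0 < N < p^L` changes only digits above its lowest nonzero one. Hence `w_p` is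
uniformly recurrent, and a configuration of `X_p`, whose long windows are factors of `w_p`,
contains every factor of `w_p`, in particular every factor of any other configuration of `X_p`.
-/

section LanguageSubshift

variable {α : Type*}

def UniformlyRecurrent (u : ℕ → α) : Prop :=
  ∀ m n : ℕ, ∃ R : ℕ, ∀ m' : ℕ, ∃ d ≤ R, ∀ j < n, u (m' + d + j) = u (m + j)

def languageSubshift (u : ℕ → α) : Set (ℤ → α) :=
  {c | ∀ (i : ℤ) (n : ℕ), ∃ m : ℕ, ∀ j : ℕ, j < n → c (i + (j : ℕ)) = u (m + j)}

theorem UniformlyRecurrent.exists_occurrence {u : ℕ → α} (hu : UniformlyRecurrent u)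
    {c c' : ℤ → α} (hc : c ∈ languageSubshift u) (hc' : c' ∈ languageSubshift u) (i : ℤ)
    (n : ℕ) : ∃ i' : ℤ, ∀ j : ℕ, j < n → c' (i' + (j : ℕ)) = c (i + (j : ℕ)) := by
  obtain ⟨m, hm⟩ := hc i n
  obtain ⟨R, hR⟩ := hu m n
  obtain ⟨m', hm'⟩ := hc' 0 (R + n)
  obtain ⟨d, hdR, hd⟩ := hR m'
  refine ⟨d, fun j hj => ?_⟩
  have hwindow := hm' (d + j) (by omega)
  rw [zero_add, Nat.cast_add, ← add_assoc] at hwindow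
  rw [hwindow, hm j hj, ← hd j hj, add_assoc]

end LanguageSubshift

lemma padicValNat_pow_mul_of_not_dvd {p a : ℕ} (hp : 1 < p) (ha : ¬ p ∣ a) (v : ℕ) :
    padicValNat p (p ^ v * a) = v := by
  have ha0 : a ≠ 0 := by rintro rfl; exact ha (dvd_zero p)
  rw [padicValNat_def' hp.ne' (by positivity)]
  refine multiplicity_eq_of_dvd_of_not_dvd (dvd_mul_right _ _) ?_
  rwa [pow_succ, Nat.mul_dvd_mul_iff_left (by positivity)]

lemma firstDigit_pow_mul_of_not_dvd {p a : ℕ} (hp : 1 < p) (ha : ¬ p ∣ a) (v : ℕ) :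
    firstDigit p (p ^ v * a) = a % p := by
  rw [firstDigit, padicValNat_pow_mul_of_not_dvd hp ha, Nat.mul_div_cancel_left _ (by positivity)]

lemma firstDigit_add_mul_pow {p N L : ℕ} (hp : 1 < p) (hN : 0 < N) (hNL : N < p ^ L) (k : ℕ) :
    firstDigit p (N + k * p ^ L) = firstDigit p N := by
  obtain ⟨v, a, ha, rfl⟩ := Nat.exists_eq_pow_mul_and_not_dvd hN.ne' p hp.ne'
  have hvL : v < L := by
    have hpow : p ^ v ≤ p ^ v * a := Nat.le_mul_of_pos_right _ (Nat.pos_of_mul_pos_left hN)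
    exact (Nat.pow_lt_pow_iff_right hp).mp (hpow.trans_lt hNL)
  obtain ⟨r, rfl⟩ := Nat.exists_eq_add_of_lt hvL
  have hsplit : p ^ v * a + k * p ^ (v + r + 1) = p ^ v * (a + p * (k * p ^ r)) := by ring
  have ha' : ¬ p ∣ a + p * (k * p ^ r) := by
    rwa [Nat.dvd_add_left (dvd_mul_right _ _)]
  rw [hsplit, firstDigit_pow_mul_of_not_dvd hp ha', firstDigit_pow_mul_of_not_dvd hp ha,
    Nat.add_mul_mod_self_left]

lemma wp_add_mul_pow {p i L : ℕ} (hp : 1 < p) (hi : i + 1 < p ^ L) (k : ℕ) :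
    wp p (i + k * p ^ L) = wp p i := by
  rw [wp, wp, add_right_comm]
  exact firstDigit_add_mul_pow hp i.succ_pos hi k

theorem wp_uniformlyRecurrent {p : ℕ} (hp : 1 < p) : UniformlyRecurrent (wp p) := by
  intro m n
  have hmn : m + n < p ^ (m + n) := Nat.lt_pow_self hp
  refine ⟨m + p ^ (m + n), fun m' => ?_⟩
  -- shift `m` by the least multiple `k * p^(m+n)` of the period that exceeds `m'`
  set P := p ^ (m + n)
  set k := m' / P + 1
  have hkP : k * P = P * (m' / P) + P := by rw [add_mul, one_mul, mul_comm]
  have hdivmod := Nat.div_add_mod m' P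
  have hmod := Nat.mod_lt m' (show 0 < P by positivity)
  refine ⟨m + k * P - m', by omega, fun j hj => ?_⟩
  rw [show m' + (m + k * P - m') + j = m + j + k * P by omega]
  exact wp_add_mul_pow hp (by omega) k

/-- The subshift `X_p` is minimal: every finite factor of a configuration of `X_p`
appears in every configuration of `X_p`. -/
theorem stmt9 (p : ℕ) (hp : 2 ≤ p) :
    ∀ c ∈ Xp p, ∀ c' ∈ Xp p, ∀ (i : ℤ) (n : ℕ),
      ∃ i' : ℤ, ∀ j : ℕ, j < n → c' (i' + (j : ℕ)) = c (i + (j : ℕ)) :=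
  fun _ hc _ hc' => (wp_uniformlyRecurrent hp).exists_occurrence hc hc'
end

section
/- Let X_7 and X_8 be the minimal Toeplitz subshifts associated to w_7 and w_8 respectively. Then the product subshift X = X_7 ⊗ X_8 ⊆ ({1,...,6}×{1,...,7})^Z, consisting of configurations c_1 ⊗ c_2 with c_i ∈ X_i, is minimal. -/
/-- The product subshift `X_7 ⊗ X_8`. -/
def XProd78 : Set (ℤ → ℕ × ℕ) :=
  {c | (fun i => (c i).1) ∈ Xp 7 ∧ (fun i => (c i).2) ∈ Xp 8}

variable {p : ℕ}

lemma padicValNat_pow_mul (hp : 2 ≤ p) (v : ℕ) {m : ℕ} (hm : ¬ p ∣ m) :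
    padicValNat p (p ^ v * m) = v := by
  have hm0 : m ≠ 0 := by rintro rfl; exact hm (dvd_zero p)
  rw [padicValNat_def' (by omega) (by positivity)]
  refine multiplicity_eq_of_dvd_of_not_dvd (dvd_mul_right _ _) fun h => hm ?_
  rw [pow_succ] at h
  exact (Nat.mul_dvd_mul_iff_left (by positivity)).1 h

lemma firstDigit_pow_mul (hp : 2 ≤ p) (v : ℕ) {m : ℕ} (hm : ¬ p ∣ m) :
    firstDigit p (p ^ v * m) = m % p := by
  rw [firstDigit, padicValNat_pow_mul hp v hm, Nat.mul_div_cancel_left _ (by positivity)]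

lemma firstDigit_of_not_dvd (hp : 2 ≤ p) {n : ℕ} (hn : ¬ p ∣ n) : firstDigit p n = n % p := by
  simpa using firstDigit_pow_mul hp 0 hn

lemma firstDigit_mul_self (hp : 2 ≤ p) {n : ℕ} (hn : n ≠ 0) :
    firstDigit p (p * n) = firstDigit p n := by
  obtain ⟨e, m, hm, rfl⟩ := Nat.exists_eq_pow_mul_and_not_dvd hn p (by omega)
  rw [← mul_assoc, ← pow_succ', firstDigit_pow_mul hp _ hm, firstDigit_pow_mul hp _ hm]

lemma firstDigit_add_mul_pow_s11 (hp : 2 ≤ p) {n K : ℕ} (hn : ¬ p ^ K ∣ n) (t : ℕ) :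
    firstDigit p (n + t * p ^ K) = firstDigit p n := by
  have hn0 : n ≠ 0 := by rintro rfl; exact hn (dvd_zero _)
  obtain ⟨e, m, hm, rfl⟩ := Nat.exists_eq_pow_mul_and_not_dvd hn0 p (by omega)
  have heK : e < K := by
    by_contra! h
    exact hn (dvd_mul_of_dvd_left (pow_dvd_pow p h) m)
  obtain ⟨d, rfl⟩ := Nat.exists_eq_add_of_lt heK
  have hsplit : p ^ e * m + t * p ^ (e + d + 1) = p ^ e * (m + p * (t * p ^ d)) := by ring
  have hm' : ¬ p ∣ m + p * (t * p ^ d) := by rwa [Nat.dvd_add_left (dvd_mul_right _ _)]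
  rw [hsplit, firstDigit_pow_mul hp e hm, firstDigit_pow_mul hp e hm', Nat.add_mul_mod_self_left]

lemma wp_mul_pow_add (hp : 2 ≤ p) {K j : ℕ} (hj : j + 1 < p ^ K) (t : ℕ) :
    wp p (t * p ^ K + j) = wp p j := by
  have hndvd : ¬ p ^ K ∣ j + 1 := Nat.not_dvd_of_pos_of_lt (by omega) hj
  rw [wp, wp, show t * p ^ K + j + 1 = j + 1 + t * p ^ K by ring, firstDigit_add_mul_pow_s11 hp hndvd]

lemma wp_of_lt (hp : 2 ≤ p) {j : ℕ} (hj : j + 1 < p) : wp p j = j + 1 := by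
  rw [wp, firstDigit_of_not_dvd hp (Nat.not_dvd_of_pos_of_lt (by omega) hj), Nat.mod_eq_of_lt hj]

lemma wp_mul_add_pred (hp : 2 ≤ p) (t : ℕ) : wp p (p * t + (p - 1)) = wp p t := by
  rw [wp, wp, show p * t + (p - 1) + 1 = p * (t + 1) by
    rw [Nat.mul_succ]; omega, firstDigit_mul_self hp t.succ_ne_zero]

lemma dvd_of_wp_eq_one (hp : 2 ≤ p) {m : ℕ} (h0 : wp p m = 1) (h1 : wp p (m + 1) ≠ 1) :
    p ∣ m := by
  have hm1 : ¬ p ∣ m + 1 := by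
    rintro ⟨k, hk⟩
    have hm2 : m + 1 + 1 = 1 + p * k := by omega
    have hndvd : ¬ p ∣ m + 1 + 1 := by
      rw [hm2, Nat.dvd_add_left (dvd_mul_right _ _)]; exact Nat.not_dvd_of_pos_of_lt one_pos hp
    rw [wp, firstDigit_of_not_dvd hp hndvd, hm2, Nat.add_mul_mod_self_left,
      Nat.mod_eq_of_lt hp] at h1
    exact h1 rfl
  rw [wp, firstDigit_of_not_dvd hp hm1] at h0
  have := Nat.mod_add_div (m + 1) p
  exact ⟨(m + 1) / p, by omega⟩

lemma pow_dvd_of_wp_add_eq (hp : 3 ≤ p) {K m : ℕ}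
    (h : ∀ j, j < p ^ K - 1 → wp p (m + j) = wp p j) : p ^ K ∣ m := by
  induction K generalizing m with
  | zero => exact one_dvd m
  | succ K ih =>
    have hpK : 1 ≤ p ^ K := Nat.one_le_pow _ _ (by omega)
    have hpK1 : p ^ (K + 1) = p * p ^ K := pow_succ' p K
    have hbig : p ≤ p ^ (K + 1) := by rw [hpK1]; exact Nat.le_mul_of_pos_right p hpK
    obtain ⟨m, rfl⟩ : p ∣ m := by
      refine dvd_of_wp_eq_one (by omega) ?_ ?_
      · simpa [wp_of_lt (p := p) (j := 0) (by omega) (by omega)] using h 0 (by omega)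
      · rw [h 1 (by omega), wp_of_lt (by omega) (by omega)]
        omega
    rw [hpK1]
    refine mul_dvd_mul_left p (ih fun j hj => ?_)
    have hlt : p * j + (p - 1) < p ^ (K + 1) - 1 := by
      have : p * j + p < p * p ^ K := by
        rw [← Nat.mul_succ]; exact Nat.mul_lt_mul_of_pos_left (by omega) (by omega)
      omega
    have hj' := h (p * j + (p - 1)) hlt
    rwa [← add_assoc, ← Nat.mul_add, wp_mul_add_pred (by omega),
      wp_mul_add_pred (by omega)] at hj'

def HasPrefixAt (p K : ℕ) (c : ℤ → ℕ) (i : ℤ) : Prop :=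
  ∀ j : ℕ, j < p ^ K - 1 → c (i + j) = wp p j

section Xp

variable {c : ℤ → ℕ}

lemma exists_hasPrefixAt (hp : 2 ≤ p) (hc : c ∈ Xp p) (K : ℕ) : ∃ i, HasPrefixAt p K c i := by
  obtain ⟨m, hm⟩ := hc 0 (2 * p ^ K)
  have hpK : 0 < p ^ K := by positivity
  set q := m / p ^ K + 1
  have hmq : m < q * p ^ K := by rw [add_mul, one_mul]; exact Nat.lt_div_mul_add hpK
  have hqm : q * p ^ K ≤ m + p ^ K := by
    rw [add_mul, one_mul]; have := Nat.div_mul_le_self m (p ^ K); omega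
  refine ⟨(q * p ^ K - m : ℕ), fun j hj => ?_⟩
  have hqj := hm (q * p ^ K - m + j) (by omega)
  rwa [Nat.cast_add, zero_add, show m + (q * p ^ K - m + j) = q * p ^ K + j by omega,
    wp_mul_pow_add hp (by omega)] at hqj

lemma HasPrefixAt.add_mul_pow (hp : 3 ≤ p) (hc : c ∈ Xp p) {K : ℕ} {i : ℤ}
    (h : HasPrefixAt p K c i) (t : ℤ) : HasPrefixAt p K c (i + t * (p : ℤ) ^ K) := by
  obtain ⟨k, l, rfl⟩ : ∃ k l : ℕ, t = l - k :=
    ⟨(-t).toNat, t.toNat, (Int.toNat_sub_toNat_neg t).symm⟩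
  obtain ⟨m, hm⟩ := hc (i - k * (p : ℤ) ^ K) ((k + l + 1) * p ^ K)
  have hsplit : (k + l + 1) * p ^ K = k * p ^ K + l * p ^ K + p ^ K := by ring
  have hmk : p ^ K ∣ m + k * p ^ K := pow_dvd_of_wp_add_eq hp fun j hj => by
    rw [add_assoc, ← hm (k * p ^ K + j) (by omega), ← h j hj]
    congr 1; push_cast; ring
  obtain ⟨s, hs⟩ : p ^ K ∣ m + l * p ^ K :=
    dvd_add ((Nat.dvd_add_left (dvd_mul_left _ _)).1 hmk) (dvd_mul_left _ _)
  intro j hj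
  calc c (i + (l - k : ℤ) * (p : ℤ) ^ K + j)
        = c (i - k * (p : ℤ) ^ K + ((l * p ^ K + j : ℕ) : ℤ)) := by congr 1; push_cast; ring
    _ = wp p (p ^ K * s + j) := by rw [hm _ (by omega), ← add_assoc, hs]
    _ = wp p j := by rw [mul_comm, wp_mul_pow_add (by omega) (by omega)]

lemma exists_forall_add_mul_pow_eq (hp : 3 ≤ p) (hc : c ∈ Xp p) {c' : ℤ → ℕ} (hc' : c' ∈ Xp p)
    (i : ℤ) (n : ℕ) :
    ∃ K : ℕ, ∃ a : ℤ, ∀ t : ℤ, ∀ j < n, c' (a + t * (p : ℤ) ^ K + j) = c (i + j) := by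
  obtain ⟨m, hm⟩ := hc i n
  have hK : m + n + 1 < p ^ (m + n + 1) := Nat.lt_pow_self (by omega)
  obtain ⟨i₀, hi₀⟩ := exists_hasPrefixAt (by omega) hc' (m + n + 1)
  refine ⟨m + n + 1, i₀ + m, fun t j hj => ?_⟩
  rw [hm j hj, ← hi₀.add_mul_pow hp hc' t (m + j) (by omega)]
  congr 1; push_cast; ring

end Xp

/-- The product subshift `X = X_7 ⊗ X_8` is minimal: every finite factor of a
configuration of `X` appears in every configuration of `X`. -/
theorem stmt11 :
    ∀ c ∈ XProd78, ∀ c' ∈ XProd78, ∀ (i : ℤ) (n : ℕ),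
      ∃ i' : ℤ, ∀ j : ℕ, j < n → c' (i' + (j : ℕ)) = c (i + (j : ℕ)) := by
  intro c hc c' hc' i n
  obtain ⟨K, a₁, h₁⟩ := exists_forall_add_mul_pow_eq (p := 7) (by norm_num) hc.1 hc'.1 i n
  obtain ⟨L, a₂, h₂⟩ := exists_forall_add_mul_pow_eq (p := 8) (by norm_num) hc.2 hc'.2 i n
  obtain ⟨u, v, huv⟩ : IsCoprime ((7 : ℤ) ^ K) ((8 : ℤ) ^ L) :=
    (Int.isCoprime_iff_gcd_eq_one.2 (by norm_num)).pow
  have hcrt : a₁ + u * (a₂ - a₁) * 7 ^ K = a₂ + -v * (a₂ - a₁) * 8 ^ L := by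
    linear_combination (a₂ - a₁) * huv
  refine ⟨a₁ + u * (a₂ - a₁) * 7 ^ K, fun j hj => Prod.ext ?_ ?_⟩
  · exact_mod_cast h₁ _ j hj
  · rw [hcrt]; exact_mod_cast h₂ _ j hj
end
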